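/- The tensor T_{BCLR} ∈ ℂ^4⊗ℂ^4⊗ℂ^4 lies in the sum of the two affine tangent spaces to the Segre variety along the lines L_β and L_γ; explicitly, T_{BCLR} ∈ (ℂ^4⊗⟨y^2_1,y^2_2⟩⊗z^2_2 + x^1_2⊗ℂ^4⊗z^2_2 + x^1_2⊗⟨y^2_1,y^2_2⟩⊗ℂ^4) + (ℂ^4⊗y^2_1⊗⟨z^1_2,z^2_2⟩ + x^2_1⊗ℂ^4⊗⟨z^1_2,z^2_2⟩ + x^2_1⊗y^2_1⊗ℂ^4), where for subspaces the notation U⊗V⊗W means the span of all u⊗v⊗w with u∈U, v∈V, w∈W. -/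
import Mathlib


/-- A simple (rank-one) tensor in coordinates: `(u ⊗ v ⊗ w)_{ijk} = u_i v_j w_k`. -/
def simpleTensor {ι₁ ι₂ ι₃ : Type} (u : ι₁ → ℂ) (v : ι₂ → ℂ) (w : ι₃ → ℂ) :
    ι₁ → ι₂ → ι₃ → ℂ :=
  fun i j k => u i * v j * w k

/-- The set of tensors of rank at most `r`: sums of `r` simple tensors. -/
def rankAtMost (ι₁ ι₂ ι₃ : Type) (r : ℕ) : Set (ι₁ → ι₂ → ι₃ → ℂ) :=
  {T | ∃ u : Fin r → ι₁ → ℂ, ∃ v : Fin r → ι₂ → ℂ, ∃ w : Fin r → ι₃ → ℂ,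
    T = ∑ s : Fin r, simpleTensor (u s) (v s) (w s)}

/-- The border rank of a tensor: the least `r` such that `T` lies in the closure of the
set of tensors of rank at most `r`. -/
noncomputable def borderRank {ι₁ ι₂ ι₃ : Type} (T : ι₁ → ι₂ → ι₃ → ℂ) : ℕ :=
  sInf {r : ℕ | T ∈ closure (rankAtMost ι₁ ι₂ ι₃ r)}

/-- The matrix multiplication tensor `M_{⟨n,m,p⟩} = ∑ x^i_j ⊗ y^j_k ⊗ z^k_i`
in coordinates: the first factor is indexed by pairs `(i,j)`, the second by `(j,k)`,
the third by `(k,i)`. -/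
def matMulTensor (n m p : ℕ) :
    (Fin n × Fin m) → (Fin m × Fin p) → (Fin p × Fin n) → ℂ :=
  fun x y z => if x.2 = y.1 ∧ y.2 = z.1 ∧ z.2 = x.1 then 1 else 0

/-- The BCLRS tensor `T_{BCLRS,m} = M_{⟨m,2,2⟩} − x^1_1 ⊗ (y^1_1 ⊗ z^1_1 + y^1_2 ⊗ z^2_1)`
(indices written 1-based in the literature, 0-based here). -/
def TBCLRS (m : ℕ) : (Fin m × Fin 2) → (Fin 2 × Fin 2) → (Fin 2 × Fin m) → ℂ :=
  fun x y z =>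
    matMulTensor m 2 2 x y z -
      (if x.1.val = 0 ∧ x.2.val = 0 then 1 else 0) *
        ((if y.1.val = 0 ∧ y.2.val = 0 then 1 else 0) *
            (if z.1.val = 0 ∧ z.2.val = 0 then 1 else 0) +
          (if y.1.val = 0 ∧ y.2.val = 1 then 1 else 0) *
            (if z.1.val = 1 ∧ z.2.val = 0 then 1 else 0))

/-- The standard basis vector `e_{(i,j)}` of a coordinate space indexed by pairs. -/
def unitVec {α β : Type} [DecidableEq α] [DecidableEq β] (i : α) (j : β) : α × β → ℂ :=
  fun p => if p = (i, j) then 1 else 0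

/-- For subspaces `U ⊆ ℂ^{ι₁}`, `V ⊆ ℂ^{ι₂}`, `W ⊆ ℂ^{ι₃}`, the subspace `U⊗V⊗W`:
the span of all simple tensors `u⊗v⊗w` with `u ∈ U`, `v ∈ V`, `w ∈ W`. -/
noncomputable def tripleSpan {ι₁ ι₂ ι₃ : Type}
    (U : Submodule ℂ (ι₁ → ℂ)) (V : Submodule ℂ (ι₂ → ℂ)) (W : Submodule ℂ (ι₃ → ℂ)) :
    Submodule ℂ (ι₁ → ι₂ → ι₃ → ℂ) :=
  Submodule.span ℂ {T | ∃ u ∈ U, ∃ v ∈ V, ∃ w ∈ W, T = simpleTensor u v w}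

/-- Basis vectors of `ℂ^4 = ℂ^{Fin 2 × Fin 2}` (0-based indices). -/
def x12 : Fin 2 × Fin 2 → ℂ := unitVec 0 1
def x21 : Fin 2 × Fin 2 → ℂ := unitVec 1 0
def y21 : Fin 2 × Fin 2 → ℂ := unitVec 1 0
def y22 : Fin 2 × Fin 2 → ℂ := unitVec 1 1
def z12 : Fin 2 × Fin 2 → ℂ := unitVec 0 1
def z22 : Fin 2 × Fin 2 → ℂ := unitVec 1 1

lemma mem_tripleSpan {ι₁ ι₂ ι₃ : Type}
    {U : Submodule ℂ (ι₁ → ℂ)} {V : Submodule ℂ (ι₂ → ℂ)} {W : Submodule ℂ (ι₃ → ℂ)}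
    {u : ι₁ → ℂ} {v : ι₂ → ℂ} {w : ι₃ → ℂ} (hu : u ∈ U) (hv : v ∈ V) (hw : w ∈ W) :
    simpleTensor u v w ∈ tripleSpan U V W :=
  Submodule.subset_span ⟨u, hu, v, hv, w, hw, rfl⟩

/-- `T_{BCLR}` lies in the sum of the affine tangent spaces to the Segre along the lines
`L_β = x^1_2 ⊗ ⟨y^2_1,y^2_2⟩ ⊗ z^2_2` and `L_γ = x^2_1 ⊗ y^2_1 ⊗ ⟨z^1_2,z^2_2⟩`:
explicitly, `T_{BCLR} ∈ (ℂ^4⊗⟨y^2_1,y^2_2⟩⊗z^2_2 + x^1_2⊗ℂ^4⊗z^2_2 + x^1_2⊗⟨y^2_1,y^2_2⟩⊗ℂ^4)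
+ (ℂ^4⊗y^2_1⊗⟨z^1_2,z^2_2⟩ + x^2_1⊗ℂ^4⊗⟨z^1_2,z^2_2⟩ + x^2_1⊗y^2_1⊗ℂ^4)`. -/
theorem TBCLR_mem_sum_tangent_spaces :
    TBCLRS 2 ∈
      (tripleSpan ⊤ (Submodule.span ℂ {y21, y22}) (Submodule.span ℂ {z22}) ⊔
        tripleSpan (Submodule.span ℂ {x12}) ⊤ (Submodule.span ℂ {z22}) ⊔
        tripleSpan (Submodule.span ℂ {x12}) (Submodule.span ℂ {y21, y22}) ⊤) ⊔
      (tripleSpan ⊤ (Submodule.span ℂ {y21}) (Submodule.span ℂ {z12, z22}) ⊔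
        tripleSpan (Submodule.span ℂ {x21}) ⊤ (Submodule.span ℂ {z12, z22}) ⊔
        tripleSpan (Submodule.span ℂ {x21}) (Submodule.span ℂ {y21}) ⊤) := by

  classical
  -- decomposition into six simple tensors
  have key : TBCLRS 2 =
      (simpleTensor x12 y21 (unitVec 0 0) + simpleTensor x12 y22 (unitVec 1 0)
        + simpleTensor (unitVec 1 1) y22 z22)
      + (simpleTensor x21 (unitVec 0 0) z12 + simpleTensor x21 (unitVec 0 1) z22
        + simpleTensor (unitVec 1 1) y21 z12) := by
    funext x y z
    obtain ⟨i, j⟩ := x; obtain ⟨j', k⟩ := y; obtain ⟨k', i'⟩ := z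
    fin_cases i <;> fin_cases j <;> fin_cases j' <;> fin_cases k <;>
      fin_cases k' <;> fin_cases i' <;>
      simp [TBCLRS, matMulTensor, simpleTensor, unitVec, x12, x21, y21, y22, z12, z22,
        Prod.ext_iff]
  rw [key]
  have memtop : ∀ v : Fin 2 × Fin 2 → ℂ, v ∈ (⊤ : Submodule ℂ (Fin 2 × Fin 2 → ℂ)) :=
    fun _ => Submodule.mem_top
  have hy21 : y21 ∈ Submodule.span ℂ {y21, y22} :=
    Submodule.subset_span (Set.mem_insert _ _)
  have hy22 : y22 ∈ Submodule.span ℂ {y21, y22} :=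
    Submodule.subset_span (Set.mem_insert_of_mem _ rfl)
  have hz12 : z12 ∈ Submodule.span ℂ {z12, z22} :=
    Submodule.subset_span (Set.mem_insert _ _)
  have hz22' : z22 ∈ Submodule.span ℂ {z12, z22} :=
    Submodule.subset_span (Set.mem_insert_of_mem _ rfl)
  have hx12 : x12 ∈ Submodule.span ℂ {x12} := Submodule.mem_span_singleton_self _
  have hx21 : x21 ∈ Submodule.span ℂ {x21} := Submodule.mem_span_singleton_self _
  have hy21s : y21 ∈ Submodule.span ℂ {y21} := Submodule.mem_span_singleton_self _
  have hz22 : z22 ∈ Submodule.span ℂ {z22} := Submodule.mem_span_singleton_self _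
  refine Submodule.add_mem _ (Submodule.mem_sup_left ?_) (Submodule.mem_sup_right ?_)
  · refine Submodule.add_mem _
      (Submodule.mem_sup_right ?_)
      (Submodule.mem_sup_left (Submodule.mem_sup_left ?_))
    · exact Submodule.add_mem _
        (mem_tripleSpan hx12 hy21 (memtop _))
        (mem_tripleSpan hx12 hy22 (memtop _))
    · exact mem_tripleSpan (memtop _) hy22 hz22
  · refine Submodule.add_mem _
      (Submodule.mem_sup_left (Submodule.mem_sup_right ?_))
      (Submodule.mem_sup_left (Submodule.mem_sup_left ?_))
    · exact Submodule.add_mem _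
        (mem_tripleSpan hx21 (memtop _) hz12)
        (mem_tripleSpan hx21 (memtop _) hz22')
    · exact mem_tripleSpan (memtop _) hy21s hz12
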